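/- For every L-homomorphism φ : B → A between L-structures and all reflexive admissible binary relations R, S, T on B, one has φ(K(R,S;T)) ⊆ K(φ(R), φ(S); φ(T)); that is, the reflexive admissible relation on A generated by the image under φ of K(R,S;T) (computed in B) is contained in K(φ(R), φ(S); φ(T)) (computed in A). -/
import Mathlib


open FirstOrder FirstOrder.Language

/-- A binary relation is admissible if it is preserved by all function symbols. -/
def Admissible (L : FirstOrder.Language) {A : Type*} [L.Structure A]
    (R : A → A → Prop) : Prop :=
  ∀ ⦃n : ℕ⦄ (f : L.Functions n) (a b : Fin n → A),
    (∀ i, R (a i) (b i)) → R (Structure.funMap f a) (Structure.funMap f b)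

/-- `cl L P` is the smallest reflexive admissible relation containing `P`. -/
def cl (L : FirstOrder.Language) {A : Type*} [L.Structure A]
    (P : A → A → Prop) : A → A → Prop :=
  fun a b => ∀ R : A → A → Prop, Reflexive R → Admissible L R →
    (∀ x y, P x y → R x y) → R a b

/-- For a homomorphism `φ : B → A`, `rmap L φ R` is the reflexive admissible
relation on `A` generated by the image of `R` under `φ`. -/
def rmap (L : FirstOrder.Language) {A B : Type*} [L.Structure A] [L.Structure B]
    (φ : B →[L] A) (R : B → B → Prop) : A → A → Prop :=
  cl L (fun x y => ∃ u v, R u v ∧ φ u = x ∧ φ v = y)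

/-- `t` is a Mal'cev term modulo `F` and `G` on `A`. -/
def MalcevModulo (L : FirstOrder.Language) {A : Type*} [L.Structure A]
    (F G : (A → A → Prop) → (A → A → Prop)) (t : L.Term (Fin 3)) : Prop :=
  ∀ R : A → A → Prop, Reflexive R → Admissible L R → ∀ a b, R a b →
    F R a (t.realize ![a, b, b]) ∧ G R (t.realize ![a, a, b]) b

/-- The operator `K(R, S; U; T)`. -/
def K4 (L : FirstOrder.Language) {A : Type*} [L.Structure A]
    (R S U T : A → A → Prop) : A → A → Prop :=
  fun z w => ∃ (h k : ℕ) (t : L.Term (Fin h ⊕ Fin k))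
    (a a' : Fin h → A) (b b' : Fin k → A),
    (∀ i, R (a i) (a' i)) ∧ (∀ j, S (b j) (b' j)) ∧
    z = t.realize (Sum.elim a' b) ∧ w = t.realize (Sum.elim a' b') ∧
    U (t.realize (Sum.elim a b)) (t.realize (Sum.elim a' b)) ∧
    T (t.realize (Sum.elim a b)) (t.realize (Sum.elim a b'))

/-- The operator `K(R, S; T)`. -/
def K3 (L : FirstOrder.Language) {A : Type*} [L.Structure A]
    (R S T : A → A → Prop) : A → A → Prop :=
  fun z w => ∃ (h k : ℕ) (t : L.Term (Fin h ⊕ Fin k))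
    (a a' : Fin h → A) (b b' : Fin k → A),
    (∀ i, R (a i) (a' i)) ∧ (∀ j, S (b j) (b' j)) ∧
    z = t.realize (Sum.elim a' b) ∧ w = t.realize (Sum.elim a' b') ∧
    T (t.realize (Sum.elim a b)) (t.realize (Sum.elim a b'))


section Aux

open FirstOrder FirstOrder.Language

variable {L : FirstOrder.Language} {A B : Type*} [L.Structure A] [L.Structure B]

theorem cl_refl (P : A → A → Prop) : Reflexive (cl L P) :=
  fun a _R hR _ _ => hR a

theorem cl_adm (P : A → A → Prop) : Admissible L (cl L P) :=
  fun _n f a b hab R hRr hRa hP => hRa f a b fun i => hab i R hRr hRa hP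

theorem cl_le {P : A → A → Prop} {x y : A} (h : P x y) : cl L P x y :=
  fun _R _ _ hP => hP x y h

theorem K3_refl {R S T : A → A → Prop} (hS : Reflexive S) (hT : Reflexive T) :
    Reflexive (K3 L R S T) := by
  intro z
  exact ⟨0, 1, Term.var (Sum.inr 0), Fin.elim0, Fin.elim0, fun _ => z, fun _ => z,
    fun i => i.elim0, fun _ => hS z, rfl, rfl, hT z⟩

theorem K3_adm {R S T : A → A → Prop} (hT : Admissible L T) :
    Admissible L (K3 L R S T) := by
  intro n f x y hxy
  choose h k t a a' b b' hR hS hz hw hT' using hxy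
  classical
  set eh : (Σ i : Fin n, Fin (h i)) ≃ Fin (Fintype.card (Σ i : Fin n, Fin (h i))) :=
    Fintype.equivFin _ with heh
  set ek : (Σ i : Fin n, Fin (k i)) ≃ Fin (Fintype.card (Σ i : Fin n, Fin (k i))) :=
    Fintype.equivFin _ with hek
  refine ⟨_, _, Term.func f (fun i => (t i).relabel
      (Sum.map (fun j => eh ⟨i, j⟩) (fun j => ek ⟨i, j⟩))),
    fun p => a (eh.symm p).1 (eh.symm p).2, fun p => a' (eh.symm p).1 (eh.symm p).2,
    fun q => b (ek.symm q).1 (ek.symm q).2, fun q => b' (ek.symm q).1 (ek.symm q).2,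
    fun p => hR _ _, fun q => hS _ _, ?_, ?_, ?_⟩
  all_goals {
    have key : ∀ (aa : ∀ i, Fin (h i) → A) (bb : ∀ i, Fin (k i) → A) (i : Fin n),
        (Sum.elim (fun p => aa (eh.symm p).1 (eh.symm p).2)
          (fun q => bb (ek.symm q).1 (ek.symm q).2) ∘
          Sum.map (fun j => eh ⟨i, j⟩) (fun j => ek ⟨i, j⟩)) =
        Sum.elim (aa i) (bb i) := by
      intro aa bb i
      funext s
      cases s with
      | inl j => exact congrArg (fun p => aa p.1 p.2) (eh.symm_apply_apply ⟨i, j⟩)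
      | inr j => exact congrArg (fun p => bb p.1 p.2) (ek.symm_apply_apply ⟨i, j⟩)
    simp only [Term.realize_func, Term.realize_relabel, key]
    first
    | exact congrArg _ (funext fun i => hz i)
    | exact congrArg _ (funext fun i => hw i)
    | exact hT f _ _ fun i => hT' i
  }

end Aux

theorem Term.realize_hom_aux {L : FirstOrder.Language} {A B : Type*} [L.Structure A] [L.Structure B] (φ : B →[L] A) {α} (t : L.Term α) (v : α → B) : t.realize (φ ∘ v) = φ (t.realize v) := FirstOrder.Language.HomClass.realize_term φ

/-- `K(R,S;T)` satisfies the homomorphism property. -/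
theorem stmt6 {L : FirstOrder.Language} {A B : Type*} [L.Structure A] [L.Structure B]
    (φ : B →[L] A) (R S T : B → B → Prop)
    (hRr : Reflexive R) (hRa : Admissible L R)
    (hSr : Reflexive S) (hSa : Admissible L S)
    (hTr : Reflexive T) (hTa : Admissible L T) :
    ∀ a b : A, rmap L φ (K3 L R S T) a b →
      K3 L (rmap L φ R) (rmap L φ S) (rmap L φ T) a b := by
  intro x y hxy
  refine hxy _ (K3_refl (cl_refl _) (cl_refl _)) (K3_adm (cl_adm _)) ?_
  rintro z w ⟨u, v, ⟨h, k, t, a, a', b, b', hR, hS, hz, hw, hT'⟩, rfl, rfl⟩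
  have elimcomp : ∀ (a : Fin h → B) (b : Fin k → B),
      Sum.elim (φ ∘ a) (φ ∘ b) = φ ∘ Sum.elim a b := by
    intro a b; funext s; cases s <;> rfl
  refine ⟨h, k, t, φ ∘ a, φ ∘ a', φ ∘ b, φ ∘ b',
    fun i => cl_le ⟨a i, a' i, hR i, rfl, rfl⟩,
    fun j => cl_le ⟨b j, b' j, hS j, rfl, rfl⟩, ?_, ?_, ?_⟩
  · rw [elimcomp, Term.realize_hom_aux, hz]
  · rw [elimcomp, Term.realize_hom_aux, hw]
  · rw [elimcomp, elimcomp, Term.realize_hom_aux, Term.realize_hom_aux]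
    exact cl_le ⟨_, _, hT', rfl, rfl⟩
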